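/- arXiv:1011.5476 — 2 statements merged into one kernel-verified Lean document; each statement's English description precedes it below -/
import Mathlib

section
/- With notation as above (Λ complete DVR with residue field k, M a finitely generated Λ-module with endomorphism f annihilated by a split monic polynomial, K the fraction field of Λ), the generalized (λ)-eigenspace satisfies: (i) M_{(λ)} ⊗_Λ K is the direct sum of the generalized μ-eigenspaces of f on M ⊗_Λ K over all eigenvalues μ congruent to λ modulo the maximal ideal; (ii) M_{(λ)} ⊗_Λ k is the generalized λ̄-eigenspace of the induced endomorphism f̄ on M ⊗_Λ k. -/
/-!
Split `P = Q * R`, where `Q` collects the factors `(X - λᵢ)^αᵢ` with `λᵢ ≡ λ`. Roots with distinct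
residues differ by a unit of the local ring `Λ`, so `Q` and `R` are coprime, and then
`ker Q(f) = im R(f)`. Images commute with base change and coprimality survives it, hence
`ker Q(f) ⊗ A = ker Q_A(f_A)` for every `Λ`-algebra `A`. Over a field, when `P` annihilates `f`,
the kernel of a subproduct of `P` that takes all factors with a given root is the sum of the
generalized eigenspaces of its roots. Over `K` the subproduct `Q_K` has this property because
`Λ → K` has proper kernel, so equal images have equal residues; over `k` all roots of `Q` are `λ̄`.
-/

open IsLocalRing Polynomial

namespace IsLocalRing

variable {R : Type*} [CommRing R] [IsLocalRing R]

lemma isUnit_sub_of_residue_ne {a b : R} (h : residue R a ≠ residue R b) : IsUnit (a - b) := by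
  rwa [← residue_ne_zero_iff_isUnit, map_sub, sub_ne_zero]

lemma residue_eq_of_algebraMap_eq {K : Type*} [CommRing K] [Nontrivial K] [Algebra R K] {a b : R}
    (h : algebraMap R K a = algebraMap R K b) : residue R a = residue R b := by
  by_contra hne
  have hunit := (isUnit_sub_of_residue_ne hne).map (algebraMap R K)
  rw [map_sub, h, sub_self] at hunit
  exact not_isUnit_zero hunit

end IsLocalRing

lemma Submodule.baseChange_range {R A M N : Type*} [CommSemiring R] [CommSemiring A]
    [Algebra R A] [AddCommMonoid M] [Module R M] [AddCommMonoid N] [Module R N]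
    (g : M →ₗ[R] N) :
    (LinearMap.range g).baseChange A = LinearMap.range (g.baseChange A) := by
  have hg : g = (LinearMap.range g).subtype ∘ₗ g.rangeRestrict := rfl
  conv_rhs => rw [hg, LinearMap.baseChange_comp]
  refine (LinearMap.range_comp_of_range_eq_top _ ?_).symm
  exact LinearMap.range_eq_top.2 (LinearMap.baseChange_surjective A g.surjective_rangeRestrict)

namespace Polynomial

section Module

variable {R M : Type*} [CommRing R] [AddCommGroup M] [Module R M]

theorem ker_aeval_eq_range_aeval_of_isCoprime (f : Module.End R M) {p q : R[X]}
    (hpq : IsCoprime p q) (h : aeval f (p * q) = 0) :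
    LinearMap.ker (aeval f p) = LinearMap.range (aeval f q) := by
  refine le_antisymm (fun x hx => ?_) ?_
  · obtain ⟨a, b, hab⟩ := hpq
    refine ⟨aeval f b x, ?_⟩
    calc aeval f q (aeval f b x) = aeval f (a * p + q * b) x := by
          rw [map_add, LinearMap.add_apply, map_mul, Module.End.mul_apply, LinearMap.mem_ker.1 hx,
            map_zero, zero_add, map_mul, Module.End.mul_apply]
      _ = x := by rw [mul_comm q b, hab, map_one, Module.End.one_apply]
  · rintro _ ⟨x, rfl⟩
    rw [LinearMap.mem_ker, ← Module.End.mul_apply, ← map_mul, h, LinearMap.zero_apply]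

theorem ker_aeval_prod_of_pairwise_isCoprime {ι : Type*} [DecidableEq ι] (f : Module.End R M)
    (s : Finset ι) (p : ι → R[X]) (hp : (s : Set ι).Pairwise fun i j => IsCoprime (p i) (p j)) :
    LinearMap.ker (aeval f (∏ i ∈ s, p i)) = ⨆ i ∈ s, LinearMap.ker (aeval f (p i)) := by
  induction s using Finset.induction_on with
  | empty => simp [Module.End.one_eq_id]
  | insert a s ha ih =>
    rw [Finset.coe_insert, Set.pairwise_insert_of_notMem (by simpa using ha)] at hp
    have hcop : IsCoprime (p a) (∏ i ∈ s, p i) := IsCoprime.prod_right fun i hi => (hp.2 i hi).1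
    rw [Finset.prod_insert ha, ← sup_ker_aeval_eq_ker_aeval_mul_of_coprime f hcop, ih hp.1,
      Finset.iSup_insert]

variable (A : Type*) [CommRing A] [Algebra R A]

theorem aeval_baseChange_map (f : Module.End R M) (p : R[X]) :
    aeval (f.baseChange A) (p.map (algebraMap R A)) = (aeval f p).baseChange A := by
  rw [aeval_map_algebraMap]
  exact aeval_algHom_apply (Module.End.baseChangeHom R A M) f p

theorem aeval_baseChange_map_eq_zero {f : Module.End R M} {p : R[X]} (h : aeval f p = 0) :
    aeval (f.baseChange A) (p.map (algebraMap R A)) = 0 := by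
  rw [aeval_baseChange_map, h, LinearMap.baseChange_zero]

theorem baseChange_ker_aeval_of_isCoprime (f : Module.End R M) {p q : R[X]}
    (hpq : IsCoprime p q) (h : aeval f (p * q) = 0) :
    (LinearMap.ker (aeval f p)).baseChange A =
      LinearMap.ker (aeval (f.baseChange A) (p.map (algebraMap R A))) := by
  have hA : aeval (f.baseChange A) (p.map (algebraMap R A) * q.map (algebraMap R A)) = 0 := by
    rw [← Polynomial.map_mul, aeval_baseChange_map_eq_zero A h]
  have hpqA : IsCoprime (p.map (algebraMap R A)) (q.map (algebraMap R A)) :=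
    hpq.map (mapRingHom (algebraMap R A))
  rw [ker_aeval_eq_range_aeval_of_isCoprime f hpq h, Submodule.baseChange_range,
    ker_aeval_eq_range_aeval_of_isCoprime _ hpqA hA, aeval_baseChange_map]

end Module

variable {R ι : Type*} [CommRing R]

theorem prod_filter_X_sub_C_pow [DecidableEq R] (s : Finset ι) (c : ι → R) (α : ι → ℕ) (b : R) :
    ∏ j ∈ s with c j = b, (X - C (c j)) ^ α j = (X - C b) ^ ∑ j ∈ s with c j = b, α j := by
  rw [← Finset.prod_pow_eq_pow_sum]
  exact Finset.prod_congr rfl fun j hj => by rw [(Finset.mem_filter.1 hj).2]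

theorem map_prod_X_sub_C_pow {A : Type*} [CommRing A] (φ : R →+* A) (s : Finset ι) (c : ι → R)
    (α : ι → ℕ) :
    (∏ i ∈ s, (X - C (c i)) ^ α i).map φ = ∏ i ∈ s, (X - C (φ (c i))) ^ α i := by
  simp [Polynomial.map_prod]

theorem isCoprime_prod_X_sub_C_pow {s t : Finset ι} (c : ι → R) (α : ι → ℕ)
    (h : ∀ i ∈ s, ∀ j ∈ t, IsUnit (c i - c j)) :
    IsCoprime (∏ i ∈ s, (X - C (c i)) ^ α i) (∏ j ∈ t, (X - C (c j)) ^ α j) :=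
  IsCoprime.prod_left fun i hi => IsCoprime.prod_right fun j hj =>
    (isCoprime_X_sub_C_of_isUnit_sub (h i hi j hj)).pow

end Polynomial

namespace Module.End

section CommRing

variable {R M : Type*} [CommRing R] [AddCommGroup M] [Module R M]

theorem aeval_X_sub_C_pow (f : End R M) (b : R) (k : ℕ) :
    aeval f ((X - C b) ^ k) = (f - b • 1) ^ k := by
  simp [Algebra.algebraMap_eq_smul_one]

theorem maxGenEigenspace_eq_ker_aeval_of_isCoprime (f : End R M) {b : R} {m : ℕ} {W : R[X]}
    (hW : IsCoprime (X - C b) W) (h : aeval f ((X - C b) ^ m * W) = 0) :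
    f.maxGenEigenspace b = LinearMap.ker (aeval f ((X - C b) ^ m)) := by
  refine le_antisymm (fun x hx => ?_) (fun x hx => ?_)
  · obtain ⟨k, hk⟩ := (mem_maxGenEigenspace f b x).1 hx
    have hmk : aeval f ((X - C b) ^ (m + k) * W) = 0 := by
      rw [pow_add, mul_comm ((X - C b) ^ m), mul_assoc, map_mul, h, mul_zero]
    -- both kernels are the image of `W(f)`
    rw [ker_aeval_eq_range_aeval_of_isCoprime f hW.pow_left h,
      ← ker_aeval_eq_range_aeval_of_isCoprime f hW.pow_left hmk, LinearMap.mem_ker, pow_add,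
      map_mul, Module.End.mul_apply, aeval_X_sub_C_pow f b k, hk, map_zero]
  · exact (mem_maxGenEigenspace f b x).2 ⟨m, by rw [← aeval_X_sub_C_pow]; exact hx⟩

end CommRing

variable {F V ι : Type*} [Field F] [AddCommGroup V] [Module F V] [Fintype ι]

theorem maxGenEigenspace_eq_ker_aeval_prod_filter [DecidableEq F] (f : End F V) (c : ι → F)
    (α : ι → ℕ) (h : aeval f (∏ i, (X - C (c i)) ^ α i) = 0) (b : F) :
    f.maxGenEigenspace b = LinearMap.ker (aeval f (∏ j with c j = b, (X - C (c j)) ^ α j)) := by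
  rw [prod_filter_X_sub_C_pow]
  refine maxGenEigenspace_eq_ker_aeval_of_isCoprime f
    (W := ∏ j with c j ≠ b, (X - C (c j)) ^ α j) ?_ ?_
  · refine IsCoprime.prod_right fun j hj => .pow_right (isCoprime_X_sub_C_of_isUnit_sub ?_)
    exact (sub_ne_zero.2 (Finset.mem_filter.1 hj).2.symm).isUnit
  · rwa [← prod_filter_X_sub_C_pow, Finset.prod_filter_mul_prod_filter_not]

theorem ker_aeval_prod_X_sub_C_pow_eq_iSup_maxGenEigenspace (f : End F V) (c : ι → F)
    (α : ι → ℕ) (h : aeval f (∏ i, (X - C (c i)) ^ α i) = 0) {S : Finset ι}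
    (hS : ∀ i ∈ S, ∀ j, c j = c i → j ∈ S) :
    LinearMap.ker (aeval f (∏ i ∈ S, (X - C (c i)) ^ α i)) =
      ⨆ i ∈ S, f.maxGenEigenspace (c i) := by
  classical
  set fiber : F → F[X] := fun b => ∏ j with c j = b, (X - C (c j)) ^ α j
  have hgroup : ∏ i ∈ S, (X - C (c i)) ^ α i = ∏ b ∈ S.image c, fiber b := by
    refine (Finset.prod_image' (f := fiber) _ fun i hi => Finset.prod_congr ?_ fun _ _ => rfl).symm
    ext j
    simp only [Finset.mem_filter, Finset.mem_univ, true_and]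
    exact ⟨fun hj => ⟨hS i hi j hj, hj⟩, And.right⟩
  have hfibers : (S.image c : Set F).Pairwise fun a b => IsCoprime (fiber a) (fiber b) :=
    fun a _ b _ hab => isCoprime_prod_X_sub_C_pow c α fun i hi j hj => by
      rw [(Finset.mem_filter.1 hi).2, (Finset.mem_filter.1 hj).2]
      exact (sub_ne_zero.2 hab).isUnit
  rw [hgroup, ker_aeval_prod_of_pairwise_isCoprime f _ fiber hfibers, Finset.iSup_finset_image]
  simp only [maxGenEigenspace_eq_ker_aeval_prod_filter f c α h, fiber]

end Module.End

theorem generalized_eigenspace_base_change_general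
    (Λ : Type*) [CommRing Λ] [IsDomain Λ] [IsDiscreteValuationRing Λ]
    [DecidableEq (ResidueField Λ)]
    (K : Type*) [Field K] [Algebra Λ K]
    (M : Type*) [AddCommGroup M] [Module Λ M]
    (f : Module.End Λ M)
    (nn : ℕ) (lam : Fin nn → Λ) (α : Fin nn → ℕ)
    (P : Polynomial Λ) (hP : P = ∏ i, (X - C (lam i)) ^ α i)
    (hann : aeval f P = 0) (lam0 : Λ) :
    (Submodule.baseChange K
        (LinearMap.ker (aeval f
          (∏ i ∈ Finset.filter (fun i => residue Λ (lam i) = residue Λ lam0) Finset.univ,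
            (X - C (lam i)) ^ α i))) =
      ⨆ i ∈ Finset.filter (fun i => residue Λ (lam i) = residue Λ lam0) Finset.univ,
        Module.End.maxGenEigenspace
          (LinearMap.baseChange K (f : M →ₗ[Λ] M)) (algebraMap Λ K (lam i))) ∧
    (Submodule.baseChange (ResidueField Λ)
        (LinearMap.ker (aeval f
          (∏ i ∈ Finset.filter (fun i => residue Λ (lam i) = residue Λ lam0) Finset.univ,
            (X - C (lam i)) ^ α i))) =
      Module.End.maxGenEigenspace
        (LinearMap.baseChange (ResidueField Λ) (f : M →ₗ[Λ] M)) (residue Λ lam0)) := by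
  subst hP
  have hcop : IsCoprime (∏ i with residue Λ (lam i) = residue Λ lam0, (X - C (lam i)) ^ α i)
      (∏ i with residue Λ (lam i) ≠ residue Λ lam0, (X - C (lam i)) ^ α i) :=
    isCoprime_prod_X_sub_C_pow lam α fun i hi j hj => isUnit_sub_of_residue_ne <| by
      rw [(Finset.mem_filter.1 hi).2]
      exact Ne.symm (Finset.mem_filter.1 hj).2
  have hann' : aeval f ((∏ i with residue Λ (lam i) = residue Λ lam0, (X - C (lam i)) ^ α i) *
      ∏ i with residue Λ (lam i) ≠ residue Λ lam0, (X - C (lam i)) ^ α i) = 0 := by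
    rwa [Finset.prod_filter_mul_prod_filter_not]
  constructor
  · have hannK := aeval_baseChange_map_eq_zero K hann
    rw [map_prod_X_sub_C_pow] at hannK
    rw [baseChange_ker_aeval_of_isCoprime K f hcop hann', map_prod_X_sub_C_pow]
    refine Module.End.ker_aeval_prod_X_sub_C_pow_eq_iSup_maxGenEigenspace _ _ α hannK ?_
    intro i hi j hji
    simp only [Finset.mem_filter, Finset.mem_univ, true_and] at hi ⊢
    exact (residue_eq_of_algebraMap_eq hji).trans hi
  · have hannk := aeval_baseChange_map_eq_zero (ResidueField Λ) hann
    rw [map_prod_X_sub_C_pow, ResidueField.algebraMap_eq] at hannk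
    rw [baseChange_ker_aeval_of_isCoprime _ f hcop hann', map_prod_X_sub_C_pow,
      ResidueField.algebraMap_eq]
    exact (Module.End.maxGenEigenspace_eq_ker_aeval_prod_filter _ (fun i => residue Λ (lam i)) α
      hannk (residue Λ lam0)).symm

/-- Scalar extension of generalized `(λ)`-eigenspaces: over the fraction field
`K` one recovers the sum of the generalized eigenspaces for the eigenvalues
congruent to `λ`, and over the residue field one recovers the generalized
`λ̄`-eigenspace. -/
theorem generalized_eigenspace_base_change
    (Λ : Type*) [CommRing Λ] [IsDomain Λ] [IsDiscreteValuationRing Λ]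
    [IsAdicComplete (maximalIdeal Λ) Λ] [DecidableEq (ResidueField Λ)]
    (K : Type*) [Field K] [Algebra Λ K] [IsFractionRing Λ K]
    (M : Type*) [AddCommGroup M] [Module Λ M] [Module.Finite Λ M]
    (f : Module.End Λ M)
    (nn : ℕ) (lam : Fin nn → Λ) (α : Fin nn → ℕ) (hα : ∀ i, 0 < α i)
    (P : Polynomial Λ) (hP : P = ∏ i, (X - C (lam i)) ^ α i)
    (hann : aeval f P = 0) (lam0 : Λ) :
    (Submodule.baseChange K
        (LinearMap.ker (aeval f
          (∏ i ∈ Finset.filter (fun i => residue Λ (lam i) = residue Λ lam0) Finset.univ,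
            (X - C (lam i)) ^ α i))) =
      ⨆ i ∈ Finset.filter (fun i => residue Λ (lam i) = residue Λ lam0) Finset.univ,
        Module.End.maxGenEigenspace
          (LinearMap.baseChange K (f : M →ₗ[Λ] M)) (algebraMap Λ K (lam i))) ∧
    (Submodule.baseChange (ResidueField Λ)
        (LinearMap.ker (aeval f
          (∏ i ∈ Finset.filter (fun i => residue Λ (lam i) = residue Λ lam0) Finset.univ,
            (X - C (lam i)) ^ α i))) =
      Module.End.maxGenEigenspace
        (LinearMap.baseChange (ResidueField Λ) (f : M →ₗ[Λ] M)) (residue Λ lam0)) :=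
  generalized_eigenspace_base_change_general Λ K M f nn lam α P hP hann lam0
end

section
/- Let 𝒯 and 𝒯' be the bounded derived categories of two finite-length abelian categories 𝒜, 𝒜' and let Θ : D^b(𝒜) → D^b(𝒜') be a perverse equivalence with respect to filtrations 𝒮_• , 𝒮'_• of the simple objects and perversity function p. Then the induced map on Grothendieck groups, written in the bases of simple objects ordered compatibly with the filtrations, is given by a matrix of the form (±unitriangular): for L ∈ 𝒮_i ∖ 𝒮_{i−1}, [Θ(L)] = (−1)^{p(i)}[L'] + (an integral combination of classes of simples in 𝒮'_{i−1}), where L ↦ L' is the bijection on simples induced by Θ. -/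
/-- A perverse equivalence induces a (±)-unitriangular map on Grothendieck
groups. Here the Grothendieck-group data is encoded by multiplicity functions:
`mlt L n s'` is the multiplicity of the simple `s'` in `H^n(Θ L)`, `ht` (resp.
`ht ∘ β.symm`) records the filtration level of a simple object, `p` is the
perversity function and `β` the induced bijection on simples. The conclusion
says that `[Θ L] = (−1)^{p(ht L)}[β L] +` a combination of classes of simples
of strictly smaller filtration level. -/
theorem perverse_equivalence_unitriangular
    (𝒮 𝒮' : Type) (r : ℕ)
    (ht : 𝒮 → ℕ) (hht : ∀ L, 1 ≤ ht L ∧ ht L ≤ r)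
    (p : ℕ → ℤ) (β : 𝒮 ≃ 𝒮')
    (mlt : 𝒮 → ℤ → (𝒮' →₀ ℤ))
    (hpos : ∀ L n s', 0 ≤ mlt L n s')
    (hfin : ∀ L, (Function.support (mlt L)).Finite)
    (h1 : ∀ L n s', mlt L n s' ≠ 0 → ht (β.symm s') ≤ ht L)
    (h2 : ∀ L n s', n ≠ -(p (ht L)) → mlt L n s' ≠ 0 → ht (β.symm s') < ht L)
    (h3 : ∀ L, mlt L (-(p (ht L))) (β L) = 1 ∧
      ∀ s', s' ≠ β L → ht (β.symm s') = ht L → mlt L (-(p (ht L))) s' = 0) :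
    ∀ L : 𝒮,
      ((∑ᶠ n : ℤ, (((-1 : ℤˣ) ^ n : ℤˣ) : ℤ) • mlt L n) (β L) =
        (((-1 : ℤˣ) ^ (p (ht L)) : ℤˣ) : ℤ)) ∧
      ∀ s' : 𝒮', s' ≠ β L → ht L ≤ ht (β.symm s') →
        (∑ᶠ n : ℤ, (((-1 : ℤˣ) ^ n : ℤˣ) : ℤ) • mlt L n) s' = 0 := by

  intro L
  have hβL : β.symm (β L) = L := β.symm_apply_apply L
  have key : ∀ s' : 𝒮',
      (∑ᶠ n : ℤ, (((-1 : ℤˣ) ^ n : ℤˣ) : ℤ) • mlt L n) s'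
        = ∑ᶠ n : ℤ, (((-1 : ℤˣ) ^ n : ℤˣ) : ℤ) * mlt L n s' := by
    intro s'
    have hsupp : (Function.support
        (fun n : ℤ => (((-1 : ℤˣ) ^ n : ℤˣ) : ℤ) • mlt L n)).Finite := by
      apply (hfin L).subset
      intro n hn
      simp only [Function.mem_support] at hn ⊢
      intro h0; apply hn; rw [h0, smul_zero]
    have := (Finsupp.applyAddHom (M := ℤ) s').map_finsum hsupp
    simpa [Finsupp.smul_apply, smul_eq_mul] using this
  constructor
  · rw [key]
    rw [finsum_eq_single _ (-(p (ht L)))]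
    · rw [(h3 L).1]
      have : ((-1 : ℤˣ) ^ (-(p (ht L)))) = (-1 : ℤˣ) ^ (p (ht L)) := by
        rw [zpow_neg, Int.units_inv_eq_self]
      rw [this, mul_one]
    · intro n hn
      have hz : mlt L n (β L) = 0 := by
        by_contra h0
        have := h2 L n (β L) hn h0
        rw [hβL] at this
        exact lt_irrefl _ this
      rw [hz, mul_zero]
  · intro s' hs' hle
    rw [key]
    have : ∀ n : ℤ, (((-1 : ℤˣ) ^ n : ℤˣ) : ℤ) * mlt L n s' = 0 := by
      intro n
      have hz : mlt L n s' = 0 := by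
        by_contra h0
        by_cases hn : n = -(p (ht L))
        · subst hn
          have heq : ht (β.symm s') = ht L := le_antisymm (h1 L _ s' h0) hle
          exact h0 ((h3 L).2 s' hs' heq)
        · exact absurd (h2 L n s' hn h0) (not_lt.mpr hle)
      rw [hz, mul_zero]
    simp only [this]
    exact finsum_zero
end
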